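/- With Ŵ as above, the divergence satisfies Ŵᵢⱼ,ᵢ = −(n+s)s|x|^{2q−2}Vⱼ, and the Laplacian satisfies ΔŴᵢⱼ = (2q(2q+2s+n−2)−2s)|x|^{2q−2}(∂ᵢVⱼ+∂ⱼVᵢ − (2/n)(div V)δᵢⱼ) − s(2q−2)(2q+2s+n)|x|^{2q−4}(Vᵢxⱼ+Vⱼxᵢ); here div V = 0 so the δᵢⱼ term vanishes. -/

import Mathlib

/-!
With `ρ = ‖x‖²`, the product rule gives `∂ᵢ(ρᵐu) = 2mρᵐ⁻¹xᵢu + ρᵐ∂ᵢu` and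
`Δ(ρᵐu) = 2m(2m+n-2)ρᵐ⁻¹u + 4mρᵐ⁻¹(x·∇u) + ρᵐΔu`, and Euler's identity `x·∇u = d·u` for `u`
homogeneous of degree `d` turns every radial derivative into a multiplication by a degree
(`s` for `∂ᵢVⱼ`, `s + 2` for `xⱼVᵢ`). What is left cancels because derivatives of `V` are
harmonic (`Δ` commutes with `∂ᵢ`), `∑ᵢ ∂ᵢ∂ⱼVᵢ = ∂ⱼ div V = 0`, and differentiating
`∑ᵢ xᵢVᵢ = 0` gives `Vⱼ + ∑ᵢ xᵢ∂ⱼVᵢ = 0`.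
-/

/-- The partial derivative `∂ᵢ f` on `ℝⁿ = EuclideanSpace ℝ (Fin n)`. -/
noncomputable def pd (n : ℕ) (i : Fin n) (f : EuclideanSpace ℝ (Fin n) → ℝ)
    (x : EuclideanSpace ℝ (Fin n)) : ℝ :=
  fderiv ℝ f x (EuclideanSpace.single i 1)

/-- The Euclidean Laplacian `Δf = ∑ᵢ ∂ᵢ∂ᵢ f` on `ℝⁿ`. -/
noncomputable def lap (n : ℕ) (f : EuclideanSpace ℝ (Fin n) → ℝ)
    (x : EuclideanSpace ℝ (Fin n)) : ℝ :=
  ∑ i, pd n i (pd n i f) x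

open Finset
open scoped ContDiff

section Smoothness

variable {E F : Type*} [NormedAddCommGroup E] [NormedSpace ℝ E]

@[fun_prop]
lemma ContDiff.differentiableAt_of_smooth [NormedAddCommGroup F] [NormedSpace ℝ F] {f : E → F}
    {x : E} (hf : ContDiff ℝ ∞ f) : DifferentiableAt ℝ f x :=
  hf.differentiable (by simp) x

-- Mathlib's `ContDiff.norm_sq` and `DifferentiableAt.norm_sq` take the scalar field explicitly,
-- which `fun_prop` cannot supply.
@[fun_prop]
lemma ContDiff.norm_sq_real [NormedAddCommGroup F] [InnerProductSpace ℝ F] {f : E → F}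
    {k : WithTop ℕ∞} (hf : ContDiff ℝ k f) : ContDiff ℝ k (fun y => ‖f y‖ ^ 2) :=
  hf.norm_sq ℝ

@[fun_prop]
lemma DifferentiableAt.norm_sq_real [NormedAddCommGroup F] [InnerProductSpace ℝ F] {f : E → F}
    {x : E} (hf : DifferentiableAt ℝ f x) : DifferentiableAt ℝ (fun y => ‖f y‖ ^ 2) x :=
  hf.norm_sq ℝ

end Smoothness

section PartialDerivatives

variable {n : ℕ} {f g : EuclideanSpace ℝ (Fin n) → ℝ} {x : EuclideanSpace ℝ (Fin n)} {i j : Fin n}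

lemma pd_add (hf : DifferentiableAt ℝ f x) (hg : DifferentiableAt ℝ g x) :
    pd n i (fun y => f y + g y) x = pd n i f x + pd n i g x := by
  simp [pd, fderiv_fun_add hf hg]

lemma pd_sub (hf : DifferentiableAt ℝ f x) (hg : DifferentiableAt ℝ g x) :
    pd n i (fun y => f y - g y) x = pd n i f x - pd n i g x := by
  simp [pd, fderiv_fun_sub hf hg]

lemma pd_mul (hf : DifferentiableAt ℝ f x) (hg : DifferentiableAt ℝ g x) :
    pd n i (fun y => f y * g y) x = pd n i f x * g x + f x * pd n i g x := by
  simp [pd, fderiv_fun_mul hf hg]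
  ring

lemma pd_const_mul (c : ℝ) (hf : DifferentiableAt ℝ f x) :
    pd n i (fun y => c * f y) x = c * pd n i f x := by
  simp [pd, fderiv_const_mul hf]

lemma pd_sum {ι : Type*} (t : Finset ι) {F : ι → EuclideanSpace ℝ (Fin n) → ℝ}
    (hF : ∀ l ∈ t, DifferentiableAt ℝ (F l) x) :
    pd n i (fun y => ∑ l ∈ t, F l y) x = ∑ l ∈ t, pd n i (F l) x := by
  simp [pd, fderiv_fun_sum hF]

lemma pd_pow (m : ℕ) (hf : DifferentiableAt ℝ f x) :
    pd n i (fun y => f y ^ m) x = m * f x ^ (m - 1) * pd n i f x := by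
  simp [pd, fderiv_fun_pow m hf]

lemma pd_const (c : ℝ) : pd n i (fun _ => c) x = 0 := by
  simp [pd]

lemma pd_eq_zero_of_forall_eq_zero (hf : ∀ y, f y = 0) : pd n i f x = 0 := by
  rw [show f = fun _ => 0 from funext hf, pd_const]

lemma pd_coord : pd n i (fun y => y j) x = if i = j then 1 else 0 := by
  rw [pd, show (fun y : EuclideanSpace ℝ (Fin n) => y j) = EuclideanSpace.proj (𝕜 := ℝ) j from rfl,
    ContinuousLinearMap.fderiv]
  simp [PiLp.single_apply, eq_comm]

lemma pd_norm_sq : pd n i (fun y => ‖y‖ ^ 2) x = 2 * x i := by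
  simp [pd, EuclideanSpace.inner_single_right]

lemma sum_coord_mul_pd_eq_fderiv (f : EuclideanSpace ℝ (Fin n) → ℝ)
    (x : EuclideanSpace ℝ (Fin n)) :
    ∑ i, x i * pd n i f x = fderiv ℝ f x x := by
  conv_rhs => enter [2]; rw [← (EuclideanSpace.basisFun (Fin n) ℝ).sum_repr x]
  simp [pd]

@[fun_prop]
lemma contDiff_pd (hf : ContDiff ℝ ∞ f) : ContDiff ℝ ∞ (pd n i f) :=
  (hf.fderiv_right le_rfl).clm_apply contDiff_const

lemma pd_pd_comm (hf : ContDiffAt ℝ 2 f x) : pd n i (pd n j f) x = pd n j (pd n i f) x := by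
  have hf' : DifferentiableAt ℝ (fderiv ℝ f) x :=
    (hf.fderiv_right (m := 1) le_rfl).differentiableAt one_ne_zero
  have second (i j : Fin n) :
      pd n i (pd n j f) x = fderiv ℝ (fderiv ℝ f) x (EuclideanSpace.single i 1)
        (EuclideanSpace.single j 1) := by
    change fderiv ℝ (fun y => fderiv ℝ f y (EuclideanSpace.single j 1)) x _ = _
    simp [fderiv_clm_apply hf' (differentiableAt_const _)]
  rw [second, second]
  exact hf.isSymmSndFDerivAt (by simp) _ _

end PartialDerivatives

section Laplacian

variable {n : ℕ} {f g : EuclideanSpace ℝ (Fin n) → ℝ} {x : EuclideanSpace ℝ (Fin n)}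

lemma lap_add (hf : ContDiff ℝ ∞ f) (hg : ContDiff ℝ ∞ g) :
    lap n (fun y => f y + g y) x = lap n f x + lap n g x := by
  have first (i : Fin n) : pd n i (fun y => f y + g y) = fun y => pd n i f y + pd n i g y :=
    funext fun y => pd_add (by fun_prop) (by fun_prop)
  simp only [lap, first, ← sum_add_distrib]
  exact sum_congr rfl fun i _ => pd_add (by fun_prop) (by fun_prop)

lemma lap_sub (hf : ContDiff ℝ ∞ f) (hg : ContDiff ℝ ∞ g) :
    lap n (fun y => f y - g y) x = lap n f x - lap n g x := by
  have first (i : Fin n) : pd n i (fun y => f y - g y) = fun y => pd n i f y - pd n i g y :=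
    funext fun y => pd_sub (by fun_prop) (by fun_prop)
  simp only [lap, first, ← sum_sub_distrib]
  exact sum_congr rfl fun i _ => pd_sub (by fun_prop) (by fun_prop)

lemma lap_const_mul (c : ℝ) (hf : ContDiff ℝ ∞ f) :
    lap n (fun y => c * f y) x = c * lap n f x := by
  have first (i : Fin n) : pd n i (fun y => c * f y) = fun y => c * pd n i f y :=
    funext fun y => pd_const_mul c (by fun_prop)
  simp only [lap, first, mul_sum]
  exact sum_congr rfl fun i _ => pd_const_mul c (by fun_prop)

lemma lap_mul (hf : ContDiff ℝ ∞ f) (hg : ContDiff ℝ ∞ g) :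
    lap n (fun y => f y * g y) x
      = lap n f x * g x + 2 * ∑ i, pd n i f x * pd n i g x + f x * lap n g x := by
  have first (i : Fin n) :
      pd n i (fun y => f y * g y) = fun y => pd n i f y * g y + f y * pd n i g y :=
    funext fun y => pd_mul (by fun_prop) (by fun_prop)
  simp only [lap, first, sum_mul, mul_sum, ← sum_add_distrib]
  refine sum_congr rfl fun i _ => ?_
  rw [pd_add (by fun_prop) (by fun_prop), pd_mul (by fun_prop) (by fun_prop),
    pd_mul (by fun_prop) (by fun_prop)]
  ring

lemma lap_coord (j : Fin n) : lap n (fun y => y j) x = 0 := by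
  have first (i : Fin n) : pd n i (fun y => y j) = fun _ => if i = j then 1 else 0 :=
    funext fun _ => pd_coord
  simp [lap, first, pd_const]

lemma lap_pd (i : Fin n) (hf : ContDiff ℝ ∞ f) : lap n (pd n i f) x = pd n i (lap n f) x := by
  unfold lap
  rw [pd_sum _ fun l _ => by fun_prop]
  refine sum_congr rfl fun l _ => ?_
  have hswap : pd n l (pd n i f) = pd n i (pd n l f) :=
    funext fun y => pd_pd_comm (hf.contDiffAt.of_le ENat.LEInfty.out)
  rw [hswap]
  exact pd_pd_comm ((contDiff_pd hf).contDiffAt.of_le ENat.LEInfty.out)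

lemma lap_pd_eq_zero (hf : ContDiff ℝ ∞ f) (hharm : ∀ y, lap n f y = 0) (i : Fin n) :
    lap n (pd n i f) x = 0 := by
  rw [lap_pd i hf]
  exact pd_eq_zero_of_forall_eq_zero hharm

end Laplacian

def IsPosHomogeneous {E : Type*} [SMul ℝ E] (f : E → ℝ) (d : ℕ) : Prop :=
  ∀ t : ℝ, 0 < t → ∀ y, f (t • y) = t ^ d * f y

namespace IsPosHomogeneous

variable {E : Type*} [NormedAddCommGroup E] [NormedSpace ℝ E] {f g : E → ℝ} {d e : ℕ}

lemma add (hf : IsPosHomogeneous f d) (hg : IsPosHomogeneous g d) :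
    IsPosHomogeneous (fun y => f y + g y) d := fun t ht y => by
  simp only [hf t ht, hg t ht]; ring

lemma mul (hf : IsPosHomogeneous f d) (hg : IsPosHomogeneous g e) :
    IsPosHomogeneous (fun y => f y * g y) (d + e) := fun t ht y => by
  simp only [hf t ht, hg t ht]; ring

lemma fderiv_apply_self (hf : IsPosHomogeneous f d) {x : E} (hfx : DifferentiableAt ℝ f x) :
    fderiv ℝ f x x = d * f x := by
  have hray : HasDerivAt (fun t : ℝ => f (t • x)) (fderiv ℝ f x x) 1 := by
    have h := hfx.hasFDerivAt.comp_hasDerivAt_of_eq (1 : ℝ)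
      ((hasDerivAt_id (1 : ℝ)).smul_const x) (one_smul ℝ x).symm
    simp only [Function.comp_def] at h
    simpa using h
  have hpow : HasDerivAt (fun t : ℝ => f (t • x)) (d * f x) 1 := by
    have hev : (fun t : ℝ => t ^ d * f x) =ᶠ[nhds 1] fun t => f (t • x) := by
      filter_upwards [eventually_gt_nhds one_pos] with t ht
      exact (hf t ht x).symm
    simpa using ((hasDerivAt_pow d (1 : ℝ)).mul_const (f x)).congr_of_eventuallyEq hev.symm
  exact hray.unique hpow

lemma fderiv_smul (hf : IsPosHomogeneous f (d + 1)) (hdiff : Differentiable ℝ f) {t : ℝ}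
    (ht : 0 < t) (y : E) : fderiv ℝ f (t • y) = t ^ d • fderiv ℝ f y := by
  have hcomp : HasFDerivAt (fun z => f (t • z)) (t • fderiv ℝ f (t • y)) y := by
    have h := (hdiff (t • y)).hasFDerivAt.comp y ((hasFDerivAt_id y).const_smul t)
    simp only [Function.comp_def] at h
    simpa using h
  have hscaled : HasFDerivAt (fun z => f (t • z)) (t ^ (d + 1) • fderiv ℝ f y) y := by
    simp_rw [hf t ht]
    exact (hdiff y).hasFDerivAt.const_mul _
  have := hcomp.unique hscaled
  rw [pow_succ, mul_comm, mul_smul] at this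
  exact smul_right_injective _ ht.ne' this

end IsPosHomogeneous

section EuclideanHomogeneity

variable {n d : ℕ} {f : EuclideanSpace ℝ (Fin n) → ℝ}

lemma isPosHomogeneous_coord (j : Fin n) :
    IsPosHomogeneous (fun y : EuclideanSpace ℝ (Fin n) => y j) 1 :=
  fun t _ y => by simp

lemma isPosHomogeneous_pd (hf : IsPosHomogeneous f (d + 1)) (hdiff : Differentiable ℝ f)
    (i : Fin n) : IsPosHomogeneous (pd n i f) d := fun t ht y => by
  simp [pd, hf.fderiv_smul hdiff ht]

lemma IsPosHomogeneous.sum_coord_mul_pd (hf : IsPosHomogeneous f d) {x : EuclideanSpace ℝ (Fin n)}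
    (hfx : DifferentiableAt ℝ f x) : ∑ i, x i * pd n i f x = d * f x := by
  rw [sum_coord_mul_pd_eq_fderiv, hf.fderiv_apply_self hfx]

end EuclideanHomogeneity

lemma natCast_mul_pow_sub_one_mul {R : Type*} [Semiring R] (k : ℕ) (a : R) :
    (k : R) * a ^ (k - 1) * a = k * a ^ k := by
  cases k <;> simp [pow_succ, mul_assoc]

section Radial

variable {n : ℕ} {x : EuclideanSpace ℝ (Fin n)}

lemma pd_norm_sq_pow (i : Fin n) (m : ℕ) :
    pd n i (fun y => (‖y‖ ^ 2) ^ m) x = 2 * m * ((‖x‖ ^ 2) ^ (m - 1) * x i) := by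
  rw [pd_pow m (by fun_prop), pd_norm_sq]
  ring

lemma lap_norm_sq_pow (m : ℕ) :
    lap n (fun y => (‖y‖ ^ 2) ^ m) x = 2 * m * (2 * m + n - 2) * (‖x‖ ^ 2) ^ (m - 1) := by
  have first (i : Fin n) : pd n i (fun y => (‖y‖ ^ 2) ^ m)
      = fun y => 2 * m * ((‖y‖ ^ 2) ^ (m - 1) * y i) :=
    funext fun y => pd_norm_sq_pow i m
  have second (i : Fin n) : pd n i (fun y => 2 * m * ((‖y‖ ^ 2) ^ (m - 1) * y i)) x
      = 2 * m * (2 * ((m - 1 : ℕ) : ℝ) * (‖x‖ ^ 2) ^ (m - 1 - 1) * x i ^ 2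
          + (‖x‖ ^ 2) ^ (m - 1)) := by
    rw [pd_const_mul _ (by fun_prop), pd_mul (by fun_prop) (by fun_prop), pd_norm_sq_pow, pd_coord,
      if_pos rfl]
    ring
  simp only [lap, first, second, ← mul_sum, sum_add_distrib, ← EuclideanSpace.real_norm_sq_eq,
    sum_const, card_univ, Fintype.card_fin, nsmul_eq_mul]
  rcases m with _ | m
  · simp
  · simp only [add_tsub_cancel_right]
    push_cast
    linear_combination (4 * (m + 1 : ℝ)) * natCast_mul_pow_sub_one_mul m (‖x‖ ^ 2)

lemma sum_pd_norm_sq_pow_mul (m : ℕ) {F : Fin n → EuclideanSpace ℝ (Fin n) → ℝ}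
    (hF : ∀ i, DifferentiableAt ℝ (F i) x) :
    ∑ i, pd n i (fun y => (‖y‖ ^ 2) ^ m * F i y) x
      = 2 * m * (‖x‖ ^ 2) ^ (m - 1) * ∑ i, x i * F i x + (‖x‖ ^ 2) ^ m * ∑ i, pd n i (F i) x := by
  simp only [mul_sum, ← sum_add_distrib]
  refine sum_congr rfl fun i _ => ?_
  rw [pd_mul (by fun_prop) (hF i), pd_norm_sq_pow]
  ring

lemma IsPosHomogeneous.lap_norm_sq_pow_mul {d : ℕ} {u : EuclideanSpace ℝ (Fin n) → ℝ}
    (hu : IsPosHomogeneous u d) (hu' : ContDiff ℝ ∞ u) (m : ℕ) :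
    lap n (fun y => (‖y‖ ^ 2) ^ m * u y) x
      = 2 * m * (2 * m + n + 2 * d - 2) * (‖x‖ ^ 2) ^ (m - 1) * u x
        + (‖x‖ ^ 2) ^ m * lap n u x := by
  have euler := hu.sum_coord_mul_pd (x := x) (by fun_prop)
  rw [lap_mul (by fun_prop) hu', lap_norm_sq_pow]
  simp only [pd_norm_sq_pow, mul_assoc, ← mul_sum] at euler ⊢
  rw [euler]
  ring

end Radial

section VectorField

variable {n s : ℕ} {V : Fin n → EuclideanSpace ℝ (Fin n) → ℝ} {x : EuclideanSpace ℝ (Fin n)}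

lemma add_sum_coord_mul_pd_eq_zero (hV : ∀ i, ContDiff ℝ ∞ (V i))
    (hrad : ∀ y, ∑ l, y l * V l y = 0) (j : Fin n) :
    V j x + ∑ l, x l * pd n j (V l) x = 0 := by
  have hterm (l : Fin n) : pd n j (fun y => y l * V l y) x
      = (if j = l then V l x else 0) + x l * pd n j (V l) x := by
    rw [pd_mul (by fun_prop) (by fun_prop), pd_coord]
    split_ifs <;> simp
  calc V j x + ∑ l, x l * pd n j (V l) x = ∑ l, pd n j (fun y => y l * V l y) x := by
        simp [hterm, sum_add_distrib]
    _ = pd n j (fun y => ∑ l, y l * V l y) x := (pd_sum _ fun l _ => by fun_prop).symm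
    _ = 0 := pd_eq_zero_of_forall_eq_zero hrad

lemma sum_pd_pd_eq_zero (hV : ∀ i, ContDiff ℝ ∞ (V i))
    (hdiv : ∀ y, ∑ i, pd n i (V i) y = 0) (j : Fin n) :
    ∑ i, pd n i (pd n j (V i)) x = 0 :=
  calc ∑ i, pd n i (pd n j (V i)) x = ∑ i, pd n j (pd n i (V i)) x :=
        sum_congr rfl fun i _ => pd_pd_comm ((hV i).contDiffAt.of_le ENat.LEInfty.out)
    _ = pd n j (fun y => ∑ i, pd n i (V i) y) x := (pd_sum _ fun i _ => by fun_prop).symm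
    _ = 0 := pd_eq_zero_of_forall_eq_zero hdiv

lemma sum_coord_mul_sym_pd (hV : ∀ i, ContDiff ℝ ∞ (V i))
    (hhom : ∀ i, IsPosHomogeneous (V i) (s + 1)) (hrad : ∀ y, ∑ l, y l * V l y = 0) (j : Fin n) :
    ∑ i, x i * (pd n i (V j) x + pd n j (V i) x) = s * V j x := by
  have euler := (hhom j).sum_coord_mul_pd (x := x) (by fun_prop)
  have radial := add_sum_coord_mul_pd_eq_zero (x := x) hV hrad j
  simp only [mul_add, sum_add_distrib, euler]
  push_cast
  linarith

lemma sum_pd_sym_pd (hV : ∀ i, ContDiff ℝ ∞ (V i)) (hharm : ∀ i y, lap n (V i) y = 0)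
    (hdiv : ∀ y, ∑ i, pd n i (V i) y = 0) (j : Fin n) :
    ∑ i, pd n i (fun y => pd n i (V j) y + pd n j (V i) y) x = 0 := by
  have hterm (i : Fin n) : pd n i (fun y => pd n i (V j) y + pd n j (V i) y) x
      = pd n i (pd n i (V j)) x + pd n i (pd n j (V i)) x :=
    pd_add (by fun_prop) (by fun_prop)
  rw [sum_congr rfl fun i _ => hterm i, sum_add_distrib, sum_pd_pd_eq_zero hV hdiv, ← lap, hharm,
    add_zero]

lemma lap_sym_pd (hV : ∀ i, ContDiff ℝ ∞ (V i)) (hharm : ∀ i y, lap n (V i) y = 0) (i j : Fin n) :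
    lap n (fun y => pd n i (V j) y + pd n j (V i) y) x = 0 := by
  rw [lap_add (by fun_prop) (by fun_prop), lap_pd_eq_zero (hV j) (hharm j),
    lap_pd_eq_zero (hV i) (hharm i), add_zero]

lemma sum_coord_mul_sym_coord_mul (hrad : ∀ y, ∑ l, y l * V l y = 0) (j : Fin n) :
    ∑ i, x i * (x j * V i x + x i * V j x) = ‖x‖ ^ 2 * V j x := by
  calc ∑ i, x i * (x j * V i x + x i * V j x)
        = x j * ∑ i, x i * V i x + (∑ i, x i ^ 2) * V j x := by
        simp only [mul_sum, sum_mul, ← sum_add_distrib]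
        exact sum_congr rfl fun i _ => by ring
    _ = ‖x‖ ^ 2 * V j x := by rw [hrad, EuclideanSpace.real_norm_sq_eq, mul_zero, zero_add]

lemma sum_pd_sym_coord_mul (hV : ∀ i, ContDiff ℝ ∞ (V i))
    (hhom : ∀ i, IsPosHomogeneous (V i) (s + 1)) (hdiv : ∀ y, ∑ i, pd n i (V i) y = 0)
    (j : Fin n) :
    ∑ i, pd n i (fun y => y j * V i y + y i * V j y) x = (n + s + 2) * V j x := by
  have hterm (i : Fin n) : pd n i (fun y => y j * V i y + y i * V j y) x
      = (if i = j then V i x else 0) + x j * pd n i (V i) x + V j x + x i * pd n i (V j) x := by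
    rw [pd_add (by fun_prop) (by fun_prop), pd_mul (by fun_prop) (by fun_prop),
      pd_mul (by fun_prop) (by fun_prop), pd_coord, pd_coord, if_pos rfl]
    split_ifs <;> ring
  have euler := (hhom j).sum_coord_mul_pd (x := x) (by fun_prop)
  simp only [hterm, sum_add_distrib, ← mul_sum, hdiv, euler, sum_ite_eq', mem_univ, if_true,
    sum_const, card_univ, Fintype.card_fin, nsmul_eq_mul]
  push_cast
  ring

lemma lap_sym_coord_mul (hV : ∀ i, ContDiff ℝ ∞ (V i)) (hharm : ∀ i y, lap n (V i) y = 0)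
    (i j : Fin n) :
    lap n (fun y => y j * V i y + y i * V j y) x = 2 * (pd n i (V j) x + pd n j (V i) x) := by
  have hcoord (k : Fin n) (g : EuclideanSpace ℝ (Fin n) → ℝ) :
      ∑ l, pd n l (fun y => y k) x * pd n l g x = pd n k g x := by
    simp [pd_coord]
  rw [lap_add (by fun_prop) (by fun_prop), lap_mul (by fun_prop) (hV i),
    lap_mul (by fun_prop) (hV j), lap_coord, lap_coord, hcoord, hcoord, hharm, hharm]
  ring

end VectorField

-- The paper's `Ŵᵢⱼ` with `q = k + 1`, so that `|y|^{2q-2} = (‖y‖²)^k` involves no truncated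
-- subtraction.
section HatW

variable {n s : ℕ} {V : Fin n → EuclideanSpace ℝ (Fin n) → ℝ} {x : EuclideanSpace ℝ (Fin n)}

lemma sum_pd_hatW (hV : ∀ i, ContDiff ℝ ∞ (V i)) (hhom : ∀ i, IsPosHomogeneous (V i) (s + 1))
    (hharm : ∀ i y, lap n (V i) y = 0) (hdiv : ∀ y, ∑ i, pd n i (V i) y = 0)
    (hrad : ∀ y, ∑ l, y l * V l y = 0) (k : ℕ) (j : Fin n) :
    ∑ i, pd n i (fun y => (‖y‖ ^ 2) ^ (k + 1) * (pd n i (V j) y + pd n j (V i) y)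
        - s * ((‖y‖ ^ 2) ^ k * (y j * V i y + y i * V j y))) x
      = -((n + s) * s) * (‖x‖ ^ 2) ^ k * V j x := by
  have hterm (i : Fin n) :
      pd n i (fun y => (‖y‖ ^ 2) ^ (k + 1) * (pd n i (V j) y + pd n j (V i) y)
        - s * ((‖y‖ ^ 2) ^ k * (y j * V i y + y i * V j y))) x
      = pd n i (fun y => (‖y‖ ^ 2) ^ (k + 1) * (pd n i (V j) y + pd n j (V i) y)) x
        - s * pd n i (fun y => (‖y‖ ^ 2) ^ k * (y j * V i y + y i * V j y)) x := by
    rw [pd_sub (by fun_prop) (by fun_prop), pd_const_mul _ (by fun_prop)]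
  rw [sum_congr rfl fun i _ => hterm i, sum_sub_distrib, ← mul_sum,
    sum_pd_norm_sq_pow_mul (k + 1) fun i => by fun_prop,
    sum_pd_norm_sq_pow_mul k fun i => by fun_prop, sum_coord_mul_sym_pd hV hhom hrad,
    sum_pd_sym_pd hV hharm hdiv, sum_coord_mul_sym_coord_mul hrad,
    sum_pd_sym_coord_mul hV hhom hdiv]
  simp only [add_tsub_cancel_right]
  push_cast
  linear_combination (-2 * s * V j x) * natCast_mul_pow_sub_one_mul k (‖x‖ ^ 2)

lemma lap_hatW (hV : ∀ i, ContDiff ℝ ∞ (V i)) (hhom : ∀ i, IsPosHomogeneous (V i) (s + 1))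
    (hharm : ∀ i y, lap n (V i) y = 0) (k : ℕ) (i j : Fin n) :
    lap n (fun y => (‖y‖ ^ 2) ^ (k + 1) * (pd n i (V j) y + pd n j (V i) y)
        - s * ((‖y‖ ^ 2) ^ k * (y j * V i y + y i * V j y))) x
      = (2 * (k + 1) * (2 * (k + 1) + 2 * s + n - 2) - 2 * s) * (‖x‖ ^ 2) ^ k
          * (pd n i (V j) x + pd n j (V i) x)
        - s * (2 * k) * (2 * k + 2 * s + n + 2) * (‖x‖ ^ 2) ^ (k - 1)
          * (x j * V i x + x i * V j x) := by
  have hsym_pd : IsPosHomogeneous (fun y => pd n i (V j) y + pd n j (V i) y) s :=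
    (isPosHomogeneous_pd (hhom j) ((hV j).differentiable (by simp)) i).add
      (isPosHomogeneous_pd (hhom i) ((hV i).differentiable (by simp)) j)
  have hsym_coord_mul : IsPosHomogeneous (fun y => y j * V i y + y i * V j y) (1 + (s + 1)) :=
    ((isPosHomogeneous_coord j).mul (hhom i)).add ((isPosHomogeneous_coord i).mul (hhom j))
  rw [lap_sub (by fun_prop) (by fun_prop), lap_const_mul _ (by fun_prop),
    hsym_pd.lap_norm_sq_pow_mul (by fun_prop), hsym_coord_mul.lap_norm_sq_pow_mul (by fun_prop),
    lap_sym_pd hV hharm, lap_sym_coord_mul hV hharm]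
  simp only [add_tsub_cancel_right]
  push_cast
  ring

end HatW

theorem divergence_and_lap_of_W_general (n s q : ℕ) (hq : 1 ≤ q)
    (V : Fin n → EuclideanSpace ℝ (Fin n) → ℝ)
    (hsmooth : ∀ i, ContDiff ℝ (⊤ : ℕ∞) (V i))
    (hhom : ∀ i, ∀ (t : ℝ) (x : EuclideanSpace ℝ (Fin n)), V i (t • x) = t ^ (s + 1) * V i x)
    (hharm : ∀ i x, lap n (V i) x = 0)
    (hdiv : ∀ x, ∑ i, pd n i (V i) x = 0)
    (hrad : ∀ x, ∑ i, x i * V i x = 0)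
    (W : EuclideanSpace ℝ (Fin n) → Fin n → Fin n → ℝ)
    (hW : ∀ x, ∀ i j, W x i j
      = ‖x‖ ^ (2 * q) * (pd n i (V j) x + pd n j (V i) x)
        - (s : ℝ) * ‖x‖ ^ (2 * q - 2) * (x j * V i x + x i * V j x)) :
    (∀ x, ∀ j, ∑ i, pd n i (fun y => W y i j) x
      = -(((n : ℝ) + (s : ℝ)) * (s : ℝ)) * ‖x‖ ^ (2 * q - 2) * V j x) ∧
    (∀ x, ∀ i j, lap n (fun y => W y i j) x
      = (2 * (q : ℝ) * (2 * (q : ℝ) + 2 * (s : ℝ) + (n : ℝ) - 2) - 2 * (s : ℝ))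
          * ‖x‖ ^ (2 * q - 2)
          * (pd n i (V j) x + pd n j (V i) x
              - (2 / (n : ℝ)) * (∑ l, pd n l (V l) x) * (if i = j then 1 else 0))
        - (s : ℝ) * (2 * (q : ℝ) - 2) * (2 * (q : ℝ) + 2 * (s : ℝ) + (n : ℝ))
          * ‖x‖ ^ (2 * (q : ℤ) - 4) * (V i x * x j + V j x * x i)) := by
  obtain ⟨k, rfl⟩ := Nat.exists_eq_add_of_le' hq
  have hVhom (i : Fin n) : IsPosHomogeneous (V i) (s + 1) := fun t _ => hhom i t
  have hpow (y : EuclideanSpace ℝ (Fin n)) : ‖y‖ ^ (2 * (k + 1) - 2) = (‖y‖ ^ 2) ^ k := by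
    rw [show 2 * (k + 1) - 2 = 2 * k by omega, pow_mul]
  have hWeq (i j : Fin n) : (fun y => W y i j) = fun y =>
      (‖y‖ ^ 2) ^ (k + 1) * (pd n i (V j) y + pd n j (V i) y)
        - s * ((‖y‖ ^ 2) ^ k * (y j * V i y + y i * V j y)) := by
    funext y
    rw [hW, hpow, pow_mul]
    ring
  refine ⟨fun x j => ?_, fun x i j => ?_⟩
  · rw [hpow]
    simp only [hWeq]
    exact sum_pd_hatW hsmooth hVhom hharm hdiv hrad k j
  · have hzpow : (k : ℝ) * ‖x‖ ^ (2 * ((k : ℤ) + 1) - 4) = k * (‖x‖ ^ 2) ^ (k - 1) := by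
      rcases k with _ | k
      · simp
      · rw [show 2 * (((k + 1 : ℕ) : ℤ) + 1) - 4 = ((2 * k : ℕ) : ℤ) by push_cast; ring,
          zpow_natCast, pow_mul, add_tsub_cancel_right]
    rw [hWeq, lap_hatW hsmooth hVhom hharm, hdiv, hpow]
    push_cast
    linear_combination (2 * s * (2 * (k + 1) + 2 * s + n) * (V i x * x j + V j x * x i)) * hzpow

/-- With `Ŵᵢⱼ = |x|^{2q}(∂ᵢVⱼ + ∂ⱼVᵢ) − s|x|^{2q−2}(xⱼVᵢ + xᵢVⱼ)` (for `V` a vector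
field of homogeneous harmonic degree-`(s+1)` components with `div V = 0`, `xᵢVᵢ = 0`),
the divergence satisfies `Ŵᵢⱼ,ᵢ = −(n+s)s|x|^{2q−2}Vⱼ`, and the Laplacian satisfies
`ΔŴᵢⱼ = (2q(2q+2s+n−2)−2s)|x|^{2q−2}(∂ᵢVⱼ+∂ⱼVᵢ − (2/n)(div V)δᵢⱼ)
  − s(2q−2)(2q+2s+n)|x|^{2q−4}(Vᵢxⱼ+Vⱼxᵢ)`. -/
theorem divergence_and_lap_of_W (n s q : ℕ) (hn : 2 ≤ n) (hs : 1 ≤ s) (hq : 1 ≤ q)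
    (V : Fin n → EuclideanSpace ℝ (Fin n) → ℝ)
    (hsmooth : ∀ i, ContDiff ℝ (⊤ : ℕ∞) (V i))
    (hhom : ∀ i, ∀ (t : ℝ) (x : EuclideanSpace ℝ (Fin n)), V i (t • x) = t ^ (s + 1) * V i x)
    (hharm : ∀ i x, lap n (V i) x = 0)
    (hdiv : ∀ x, ∑ i, pd n i (V i) x = 0)
    (hrad : ∀ x, ∑ i, x i * V i x = 0)
    (W : EuclideanSpace ℝ (Fin n) → Fin n → Fin n → ℝ)
    (hW : ∀ x, ∀ i j, W x i j
      = ‖x‖ ^ (2 * q) * (pd n i (V j) x + pd n j (V i) x)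
        - (s : ℝ) * ‖x‖ ^ (2 * q - 2) * (x j * V i x + x i * V j x)) :
    (∀ x, ∀ j, ∑ i, pd n i (fun y => W y i j) x
      = -(((n : ℝ) + (s : ℝ)) * (s : ℝ)) * ‖x‖ ^ (2 * q - 2) * V j x) ∧
    (∀ x, ∀ i j, lap n (fun y => W y i j) x
      = (2 * (q : ℝ) * (2 * (q : ℝ) + 2 * (s : ℝ) + (n : ℝ) - 2) - 2 * (s : ℝ))
          * ‖x‖ ^ (2 * q - 2)
          * (pd n i (V j) x + pd n j (V i) x
              - (2 / (n : ℝ)) * (∑ l, pd n l (V l) x) * (if i = j then 1 else 0))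
        - (s : ℝ) * (2 * (q : ℝ) - 2) * (2 * (q : ℝ) + 2 * (s : ℝ) + (n : ℝ))
          * ‖x‖ ^ (2 * (q : ℤ) - 4) * (V i x * x j + V j x * x i)) :=
  divergence_and_lap_of_W_general n s q hq V hsmooth hhom hharm hdiv hrad W hW
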